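/- arXiv:1205.0942 — 4 statements merged into one kernel-verified Lean document; each statement's English description precedes it below -/
import Mathlib

section
/- Let K ∈ ℝ, D > 0 and λ ∈ ℝ. Suppose f : ℝ → ℝ is twice continuously differentiable on [−D, D], satisfies f(−D) = f(D) = 0, satisfies f(x) > 0 for all x ∈ (−D, D), and satisfies the Dirichlet eigenvalue equation f''(x) − K·x·f'(x) = −(λ − K)·f(x) for all x ∈ [−D, D]. Then with d = 2D, for every s ∈ (0, 1) one has λ ≥ 4s(1−s)·π²/d² + K·s. -/
open Real Set Filter Topology

/-!
Compare `f` with the barrier `φ(x) = cos(bx)^(4s(1-s)) · exp(K(1-s)x²/2)`, `0 < bD < π/2`.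
Writing `φ = exp ∫ ψ`, one finds `φ'' - Kxφ' = (ψ² + ψ' - Kxψ) φ`, and
`ψ² + ψ' - Kxψ = -(4s(1-s)b² - K(1-s)) - s(1-s)(2(2s-1)b tan(bx) - Kx)²`,
so `φ` is a supersolution with constant `ν = 4s(1-s)b² - K(1-s)`.
At an interior maximum of `f/φ` (it exists since `f` vanishes at `±D`), `f` touches `Mφ` from
below, so `-(λ-K) f = f'' - Kxf' ≤ M(φ'' - Kxφ') ≤ -ν f`, i.e. `ν ≤ λ - K`.
Letting `b ↑ π/(2D)` gives the bound.
-/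

section MaximumPrinciple

variable {f f' g g' : ℝ → ℝ} {x₀ : ℝ}

theorem IsLocalMax.deriv_deriv_nonpos (h : IsLocalMax f x₀) (hc : ContinuousAt f x₀) :
    deriv (deriv f) x₀ ≤ 0 := by
  by_contra! hpos
  -- A local max that is also a local min makes `f` locally constant.
  have hconst : f =ᶠ[𝓝 x₀] fun _ => f x₀ :=
    ((isLocalMin_of_deriv_deriv_pos hpos h.deriv_eq_zero hc).and h).mono
      fun x hx => le_antisymm hx.2 hx.1
  rw [hconst.deriv.deriv_eq] at hpos
  simp at hpos

theorem IsLocalMax.hasDerivAt_deriv_nonpos {f'' : ℝ} (h : IsLocalMax f x₀)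
    (hf : ∀ᶠ x in 𝓝 x₀, HasDerivAt f (f' x) x) (hf' : HasDerivAt f' f'' x₀) : f'' ≤ 0 := by
  have hderiv : deriv f =ᶠ[𝓝 x₀] f' := hf.mono fun x hx => hx.deriv
  rw [← hf'.deriv, ← hderiv.deriv_eq]
  exact h.deriv_deriv_nonpos hf.self_of_nhds.continuousAt

theorem hasDerivAt_eq_and_le_of_eventuallyLE {f'' g'' : ℝ} (hle : f ≤ᶠ[𝓝 x₀] g)
    (heq : f x₀ = g x₀) (hf : ∀ᶠ x in 𝓝 x₀, HasDerivAt f (f' x) x) (hf' : HasDerivAt f' f'' x₀)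
    (hg : ∀ᶠ x in 𝓝 x₀, HasDerivAt g (g' x) x) (hg' : HasDerivAt g' g'' x₀) :
    f' x₀ = g' x₀ ∧ f'' ≤ g'' := by
  have hmax : IsLocalMax (fun x => f x - g x) x₀ :=
    hle.mono fun x hx => by simp only [heq, sub_self]; linarith
  have hd : ∀ᶠ x in 𝓝 x₀, HasDerivAt (fun x => f x - g x) (f' x - g' x) x :=
    (hf.and hg).mono fun x hx => hx.1.sub hx.2
  exact ⟨sub_eq_zero.1 (hmax.hasDerivAt_eq_zero hd.self_of_nhds),
    sub_nonpos.1 (hmax.hasDerivAt_deriv_nonpos hd (hf'.sub hg'))⟩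

theorem exists_mem_Ioo_isMaxOn_div {φ : ℝ → ℝ} {a b y : ℝ} (hf : ContinuousOn f (Icc a b))
    (hφ : ContinuousOn φ (Icc a b)) (hφpos : ∀ x ∈ Icc a b, 0 < φ x)
    (ha : f a = 0) (hb : f b = 0) (hy : y ∈ Icc a b) (hfy : 0 < f y) :
    ∃ x₀ ∈ Ioo a b, IsMaxOn (fun x => f x / φ x) (Icc a b) x₀ := by
  obtain ⟨x₀, hx₀, hmax⟩ :=
    isCompact_Icc.exists_isMaxOn ⟨y, hy⟩ (hf.div hφ fun x hx => (hφpos x hx).ne')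
  have hfx₀ : f x₀ ≠ 0 := by
    intro h0
    have := (div_pos hfy (hφpos y hy)).trans_le (hmax hy)
    simp [h0] at this
  refine ⟨x₀, ⟨hx₀.1.lt_of_ne ?_, hx₀.2.lt_of_ne ?_⟩, hmax⟩ <;> rintro rfl <;> contradiction

theorem le_of_dirichlet_eigenfunction_of_supersolution {c φ φ' φ'' : ℝ → ℝ} {a b μ ν : ℝ}
    (hab : a < b) (hf : ContDiffOn ℝ 2 f (Icc a b)) (ha : f a = 0) (hb : f b = 0)
    (hpos : ∀ x ∈ Ioo a b, 0 < f x)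
    (heig : ∀ x ∈ Ioo a b, deriv (deriv f) x + c x * deriv f x = -μ * f x)
    (hφ : ContinuousOn φ (Icc a b)) (hφpos : ∀ x ∈ Icc a b, 0 < φ x)
    (hφ' : ∀ x ∈ Ioo a b, HasDerivAt φ (φ' x) x) (hφ'' : ∀ x ∈ Ioo a b, HasDerivAt φ' (φ'' x) x)
    (hsuper : ∀ x ∈ Ioo a b, φ'' x + c x * φ' x ≤ -ν * φ x) : ν ≤ μ := by
  obtain ⟨m, hm⟩ := exists_between hab
  obtain ⟨x₀, hx₀, hmax⟩ := exists_mem_Ioo_isMaxOn_div hf.continuousOn hφ hφpos ha hb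
    (Ioo_subset_Icc_self hm) (hpos m hm)
  have hφx₀ := hφpos x₀ (Ioo_subset_Icc_self hx₀)
  set M := f x₀ / φ x₀
  have hM : 0 < M := div_pos (hpos x₀ hx₀) hφx₀
  have hnhds : Ioo a b ∈ 𝓝 x₀ := isOpen_Ioo.mem_nhds hx₀
  have hle : f ≤ᶠ[𝓝 x₀] fun x => M * φ x := eventually_of_mem hnhds fun x hx =>
    (div_le_iff₀ (hφpos x (Ioo_subset_Icc_self hx))).1 (hmax (Ioo_subset_Icc_self hx))
  have heq : f x₀ = M * φ x₀ := (div_mul_cancel₀ _ hφx₀.ne').symm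
  have hf₂ : ContDiffAt ℝ 2 f x₀ := hf.contDiffAt (Icc_mem_nhds hx₀.1 hx₀.2)
  have hfd : ∀ᶠ x in 𝓝 x₀, HasDerivAt f (deriv f x) x :=
    (hf₂.eventually (by simp)).mono fun x hx => (hx.differentiableAt (by simp)).hasDerivAt
  have hfd₂ : HasDerivAt (deriv f) (deriv (deriv f) x₀) x₀ :=
    ((hf₂.derivWithin (m := 1) (by norm_num)).differentiableAt one_ne_zero).hasDerivAt
  obtain ⟨hd₁, hd₂⟩ := hasDerivAt_eq_and_le_of_eventuallyLE hle heq hfd hfd₂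
    (eventually_of_mem hnhds fun x hx => (hφ' x hx).const_mul M) ((hφ'' x₀ hx₀).const_mul M)
  have key : -μ * f x₀ ≤ -ν * f x₀ := calc
    -μ * f x₀ = deriv (deriv f) x₀ + c x₀ * deriv f x₀ := (heig x₀ hx₀).symm
    _ ≤ M * (φ'' x₀ + c x₀ * φ' x₀) := by rw [hd₁]; linarith
    _ ≤ M * (-ν * φ x₀) := mul_le_mul_of_nonneg_left (hsuper x₀ hx₀) hM.le
    _ = -ν * f x₀ := by rw [heq]; ring
  exact neg_le_neg_iff.1 (le_of_mul_le_mul_right key (hpos x₀ hx₀))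

end MaximumPrinciple

section Barrier

variable {p γ b x : ℝ}

noncomputable def barrier (p γ b x : ℝ) : ℝ := cos (b * x) ^ p * exp (γ / 2 * x ^ 2)

noncomputable def barrierLogDeriv (p γ b x : ℝ) : ℝ := γ * x - p * b * tan (b * x)

theorem barrier_pos (hc : 0 < cos (b * x)) : 0 < barrier p γ b x :=
  mul_pos (rpow_pos_of_pos hc p) (exp_pos _)

theorem hasDerivAt_barrier (hc : 0 < cos (b * x)) :
    HasDerivAt (barrier p γ b) (barrier p γ b x * barrierLogDeriv p γ b x) x := by
  have hcos : HasDerivAt (fun y => cos (b * y)) (-sin (b * x) * b) x := by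
    simpa using ((hasDerivAt_id x).const_mul b).cos
  have hsq : HasDerivAt (fun y : ℝ => γ / 2 * y ^ 2) (γ / 2 * (2 * x)) x := by
    simpa using (hasDerivAt_pow 2 x).const_mul (γ / 2)
  refine ((hcos.rpow_const (p := p) (Or.inl hc.ne')).mul hsq.exp).congr_deriv ?_
  unfold barrier barrierLogDeriv
  rw [tan_eq_sin_div_cos, rpow_sub_one hc.ne']
  field_simp
  ring

theorem hasDerivAt_barrierLogDeriv (hc : cos (b * x) ≠ 0) :
    HasDerivAt (barrierLogDeriv p γ b) (γ - p * b ^ 2 * (1 + tan (b * x) ^ 2)) x := by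
  have htan : HasDerivAt (fun y => tan (b * y)) (1 / cos (b * x) ^ 2 * b) x :=
    (hasDerivAt_tan hc).comp x (((hasDerivAt_id' x).const_mul b).congr_deriv (mul_one b))
  refine (((hasDerivAt_id' x).const_mul γ).sub (htan.const_mul (p * b))).congr_deriv ?_
  rw [← inv_one_add_tan_sq hc]
  field_simp

theorem hasDerivAt_barrier_mul_barrierLogDeriv (hc : 0 < cos (b * x)) :
    HasDerivAt (fun y => barrier p γ b y * barrierLogDeriv p γ b y)
      (barrier p γ b x *
        (barrierLogDeriv p γ b x ^ 2 + (γ - p * b ^ 2 * (1 + tan (b * x) ^ 2)))) x :=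
  ((hasDerivAt_barrier hc).mul (hasDerivAt_barrierLogDeriv hc.ne')).congr_deriv (by ring)

theorem barrier_supersolution {s K : ℝ} (hp : p = 4 * s * (1 - s)) (hγ : γ = K * (1 - s))
    (hs : s ∈ Icc (0 : ℝ) 1) (hc : 0 < cos (b * x)) :
    barrier p γ b x * (barrierLogDeriv p γ b x ^ 2 + (γ - p * b ^ 2 * (1 + tan (b * x) ^ 2)))
        - K * x * (barrier p γ b x * barrierLogDeriv p γ b x)
      ≤ -(p * b ^ 2 - γ) * barrier p γ b x := by
  have hdefect : barrierLogDeriv p γ b x ^ 2 + (γ - p * b ^ 2 * (1 + tan (b * x) ^ 2))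
      - K * x * barrierLogDeriv p γ b x
      = -(p * b ^ 2 - γ) - s * (1 - s) * (2 * (2 * s - 1) * b * tan (b * x) - K * x) ^ 2 := by
    rw [barrierLogDeriv, hp, hγ]
    ring
  have hs' : 0 ≤ s * (1 - s) := mul_nonneg hs.1 (sub_nonneg.2 hs.2)
  calc _ = barrier p γ b x * (barrierLogDeriv p γ b x ^ 2
          + (γ - p * b ^ 2 * (1 + tan (b * x) ^ 2)) - K * x * barrierLogDeriv p γ b x) := by ring
    _ ≤ barrier p γ b x * -(p * b ^ 2 - γ) := by
      rw [hdefect]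
      exact mul_le_mul_of_nonneg_left (sub_le_self _ (mul_nonneg hs' (sq_nonneg _)))
        (barrier_pos hc).le
    _ = _ := by ring

end Barrier

theorem add_le_of_dirichlet_eigenfunction {K D lam s b : ℝ} {f : ℝ → ℝ} (hD : 0 < D)
    (hf : ContDiffOn ℝ 2 f (Icc (-D) D)) (hbl : f (-D) = 0) (hbr : f D = 0)
    (hpos : ∀ x ∈ Ioo (-D) D, 0 < f x)
    (heig : ∀ x ∈ Icc (-D) D, deriv (deriv f) x - K * x * deriv f x = -(lam - K) * f x)
    (hs : s ∈ Icc (0 : ℝ) 1) (hb : 0 < b) (hbD : b * D < π / 2) :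
    4 * s * (1 - s) * b ^ 2 + K * s ≤ lam := by
  set p := 4 * s * (1 - s)
  set γ := K * (1 - s)
  have hcos : ∀ x ∈ Icc (-D) D, 0 < cos (b * x) := fun x hx =>
    cos_pos_of_mem_Ioo ⟨by nlinarith [hx.1], by nlinarith [hx.2]⟩
  have hcos' : ∀ x ∈ Ioo (-D) D, 0 < cos (b * x) := fun x hx => hcos x (Ioo_subset_Icc_self hx)
  have := le_of_dirichlet_eigenfunction_of_supersolution (c := fun x => -(K * x))
    (φ := barrier p γ b) (μ := lam - K) (ν := p * b ^ 2 - γ) (by linarith) hf hbl hbr hpos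
    (fun x hx => by linarith [heig x (Ioo_subset_Icc_self hx)])
    (fun x hx => (hasDerivAt_barrier (hcos x hx)).continuousAt.continuousWithinAt)
    (fun x hx => barrier_pos (hcos x hx)) (fun x hx => hasDerivAt_barrier (hcos' x hx))
    (fun x hx => hasDerivAt_barrier_mul_barrierLogDeriv (hcos' x hx))
    (fun x hx => by linarith [barrier_supersolution (K := K) rfl rfl hs (hcos' x hx)])
  linarith

/-- Futaki–Li–Li: Dirichlet estimate for `L = d²/dx² - Kx d/dx` on `[-D, D]`:
if `f` is a positive Dirichlet eigenfunction with eigenvalue `λ - K`, then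
`λ ≥ 4s(1-s)π²/d² + Ks` for all `s ∈ (0,1)`, where `d = 2D`. -/
theorem stmt_1 (K D lam : ℝ) (hD : 0 < D) (f : ℝ → ℝ)
    (hf : ContDiffOn ℝ 2 f (Icc (-D) D))
    (hbl : f (-D) = 0) (hbr : f D = 0)
    (hpos : ∀ x ∈ Ioo (-D) D, 0 < f x)
    (heig : ∀ x ∈ Icc (-D) D,
      deriv (deriv f) x - K * x * deriv f x = -(lam - K) * f x) :
    ∀ s ∈ Ioo (0:ℝ) 1, lam ≥ 4 * s * (1 - s) * π ^ 2 / (2 * D) ^ 2 + K * s := by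
  intro s hs
  have hB : 0 < π / (2 * D) := by positivity
  have hkey : Ioo 0 (π / (2 * D)) ⊆ {b | 4 * s * (1 - s) * b ^ 2 + K * s ≤ lam} := by
    intro b hb
    have hbD : b * (2 * D) < π := (lt_div_iff₀ (by positivity)).1 hb.2
    exact add_le_of_dirichlet_eigenfunction hD hf hbl hbr hpos heig (Ioo_subset_Icc_self hs) hb.1
      (by linarith)
  have hlim : 4 * s * (1 - s) * (π / (2 * D)) ^ 2 + K * s ≤ lam :=
    (isClosed_le (by fun_prop) continuous_const).closure_subset_iff.2 hkey
      (by rw [closure_Ioo hB.ne]; exact right_mem_Icc.2 hB.le)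
  rwa [div_pow, ← mul_div_assoc] at hlim
end

section
/- Let K ∈ ℝ, D > 0, λ ∈ ℝ and a > 1, and set s = 1 − 1/a. Suppose f : ℝ → ℝ is twice continuously differentiable on [−D, D], satisfies f(−D) = f(D) = 0, satisfies f(x) > 0 for all x ∈ (−D, D), and satisfies f''(x) − K·x·f'(x) = −(λ − K)·f(x) for all x ∈ [−D, D]. Define u : (−D, D) → ℝ by u(x) = f(x)^{a/2}. Then 4s(1−s)·∫_{−D}^{D} u'(x)² dx = (λ − K·s)·∫_{−D}^{D} u(x)² dx. -/
/-!
With `s = 1 - 1/a`, the flux `B = f^(a-1) f' - (K/a) x f^a` vanishes at both endpoints, and the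
eigenvalue equation gives `B' = (a-1) f^(a-2) f'^2 - (λ - K s) f^a` inside the interval. For
`a < 2` the first term blows up at the endpoints, but it is nonnegative, so `B'` is bounded below
and hence integrable; the fundamental theorem of calculus then yields
`(a-1) ∫ f^(a-2) f'^2 = (λ - K s) ∫ f^a`. Since `u'^2 = (a²/4) f^(a-2) f'^2` and
`4 s (1-s) a²/4 = a - 1`, this is the claim.
-/

open Real Set intervalIntegral MeasureTheory

lemma integrableOn_deriv_of_const_le {g g' : ℝ → ℝ} {p q m : ℝ}
    (hcont : ContinuousOn g (Icc p q))
    (hderiv : ∀ x ∈ Ioo p q, HasDerivAt g (g' x) x) (hm : ∀ x ∈ Ioo p q, m ≤ g' x) :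
    IntegrableOn g' (Ioc p q) := by
  have hshift : IntegrableOn (fun x => g' x - m) (Ioc p q) :=
    integrableOn_deriv_of_nonneg (g := fun x => g x - m * x)
      (hcont.sub (continuousOn_const.mul continuousOn_id))
      (fun x hx =>
        ((hderiv x hx).sub ((hasDerivAt_id' x).const_mul m)).congr_deriv (by rw [mul_one]))
      (fun x hx => sub_nonneg.2 (hm x hx))
  exact (hshift.add ((continuousOn_const (c := m)).integrableOn_Icc.mono_set
    Ioc_subset_Icc_self)).congr_fun (fun x _ => sub_add_cancel (g' x) m) measurableSet_Ioc

lemma hasDerivAt_flux {f f' : ℝ → ℝ} {f'' K lam a x : ℝ} (ha : a ≠ 0) (hfx : 0 < f x)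
    (hf : HasDerivAt f (f' x) x) (hf' : HasDerivAt f' f'' x)
    (heig : f'' - K * x * f' x = -(lam - K) * f x) :
    HasDerivAt (fun y => f y ^ (a - 1) * f' y - K / a * (y * f y ^ a))
      ((a - 1) * (f x ^ (a - 2) * f' x ^ 2) - (lam - K * (1 - 1 / a)) * f x ^ a) x := by
  have h1 := (hf.rpow_const (p := a - 1) (Or.inl hfx.ne')).mul hf'
  have h2 := ((hasDerivAt_id' x).mul (hf.rpow_const (p := a) (Or.inl hfx.ne'))).const_mul (K / a)
  refine (h1.sub h2).congr_deriv ?_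
  have e1 : f x ^ (a - 1) = f x ^ (a - 2) * f x := by
    rw [← rpow_add_one hfx.ne']; ring_nf
  have e2 : f x ^ a = f x ^ (a - 2) * f x * f x := by
    rw [← e1, ← rpow_add_one hfx.ne']; ring_nf
  rw [show a - 1 - 1 = a - 2 by ring, e1, e2,
    show f'' = K * x * f' x - (lam - K) * f x by linarith]
  field_simp
  ring

theorem integral_rpow_mul_deriv_sq_eq {f f' f'' : ℝ → ℝ} {p q K lam a : ℝ} (hpq : p ≤ q)
    (ha : 1 < a) (hfc : ContinuousOn f (Icc p q)) (hf'c : ContinuousOn f' (Icc p q))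
    (hp : f p = 0) (hq : f q = 0) (hpos : ∀ x ∈ Ioo p q, 0 < f x)
    (hf : ∀ x ∈ Ioo p q, HasDerivAt f (f' x) x)
    (hf' : ∀ x ∈ Ioo p q, HasDerivAt f' (f'' x) x)
    (heig : ∀ x ∈ Ioo p q, f'' x - K * x * f' x = -(lam - K) * f x) :
    (a - 1) * ∫ x in p..q, f x ^ (a - 2) * f' x ^ 2
      = (lam - K * (1 - 1 / a)) * ∫ x in p..q, f x ^ a := by
  set L := lam - K * (1 - 1 / a)
  set B := fun y => f y ^ (a - 1) * f' y - K / a * (y * f y ^ a)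
  have hfa : ContinuousOn (fun x => f x ^ a) (Icc p q) :=
    hfc.rpow_const fun _ _ => Or.inr (by linarith)
  have hB : ContinuousOn B (Icc p q) :=
    ((hfc.rpow_const fun _ _ => Or.inr (by linarith)).mul hf'c).sub
      (continuousOn_const.mul (continuousOn_id.mul hfa))
  have hB' : ∀ x ∈ Ioo p q,
      HasDerivAt B ((a - 1) * (f x ^ (a - 2) * f' x ^ 2) - L * f x ^ a) x := fun x hx =>
    hasDerivAt_flux (by positivity) (hpos x hx) (hf x hx) (hf' x hx) (heig x hx)
  obtain ⟨M, hM⟩ := isCompact_Icc.exists_bound_of_continuousOn hfa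
  have hB'int : IntervalIntegrable
      (fun x => (a - 1) * (f x ^ (a - 2) * f' x ^ 2) - L * f x ^ a) volume p q := by
    refine (intervalIntegrable_iff_integrableOn_Ioc_of_le hpq).2 <|
      integrableOn_deriv_of_const_le hB hB' (m := -(|L| * M)) fun x hx => ?_
    have hbound : |L * f x ^ a| ≤ |L| * M := by
      rw [abs_mul]; exact mul_le_mul_of_nonneg_left (hM x (Ioo_subset_Icc_self hx)) (abs_nonneg L)
    have hsing : 0 ≤ (a - 1) * (f x ^ (a - 2) * f' x ^ 2) :=
      mul_nonneg (by linarith) (mul_nonneg (rpow_nonneg (hpos x hx).le _) (sq_nonneg _))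
    linarith [le_abs_self (L * f x ^ a)]
  have hfaint : IntervalIntegrable (fun x => f x ^ a) volume p q :=
    hfa.intervalIntegrable_of_Icc hpq
  have hint : IntervalIntegrable (fun x => f x ^ (a - 2) * f' x ^ 2) volume p q := by
    convert (hB'int.add (hfaint.const_mul L)).const_mul (a - 1)⁻¹ using 1
    funext x
    have : a - 1 ≠ 0 := (sub_pos.2 ha).ne'
    field_simp
    ring
  have hftc := integral_eq_sub_of_hasDerivAt_of_le hpq hB hB' hB'int
  rw [integral_sub (hint.const_mul _) (hfaint.const_mul _), intervalIntegral.integral_const_mul,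
    intervalIntegral.integral_const_mul] at hftc
  have hB0 : ∀ y, f y = 0 → B y = 0 := fun y hy => by
    simp [B, hy, zero_rpow (by linarith : a - 1 ≠ 0), zero_rpow (by linarith : a ≠ 0)]
  linarith [hB0 p hp, hB0 q hq]

lemma integral_deriv_rpow_half_sq {f f' : ℝ → ℝ} {p q a : ℝ} (hpq : p ≤ q)
    (hpos : ∀ x ∈ Ioo p q, 0 < f x) (hf : ∀ x ∈ Ioo p q, HasDerivAt f (f' x) x) :
    ∫ x in p..q, (deriv (fun y => f y ^ (a / 2)) x) ^ 2
      = a ^ 2 / 4 * ∫ x in p..q, f x ^ (a - 2) * f' x ^ 2 := by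
  rw [← intervalIntegral.integral_const_mul]
  refine integral_congr_Ioo_of_le hpq fun x hx => ?_
  have hfx := hpos x hx
  rw [((hf x hx).rpow_const (p := a / 2) (Or.inl hfx.ne')).deriv, mul_pow, mul_pow,
    ← rpow_mul_natCast hfx.le]
  push_cast
  ring_nf

lemma integral_rpow_half_sq {f : ℝ → ℝ} {p q a : ℝ} (hpq : p ≤ q)
    (hpos : ∀ x ∈ Ioo p q, 0 < f x) :
    ∫ x in p..q, (f x ^ (a / 2)) ^ 2 = ∫ x in p..q, f x ^ a :=
  integral_congr_Ioo_of_le hpq fun x hx => by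
    rw [← rpow_mul_natCast (hpos x hx).le]; push_cast; ring_nf

/-- Rayleigh-quotient identity for the power `u = f^{a/2}` of the first Dirichlet
eigenfunction `f` of `L = d²/dx² - Kx d/dx` with eigenvalue `λ - K`:
`4s(1-s) ∫ u'² = (λ - Ks) ∫ u²` where `s = 1 - 1/a`. -/
theorem stmt_3 (K D lam a s : ℝ) (hD : 0 < D) (ha : 1 < a) (hs : s = 1 - 1 / a)
    (f : ℝ → ℝ) (hf : ContDiffOn ℝ 2 f (Icc (-D) D))
    (hbl : f (-D) = 0) (hbr : f D = 0)
    (hpos : ∀ x ∈ Ioo (-D) D, 0 < f x)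
    (heig : ∀ x ∈ Icc (-D) D,
      deriv (deriv f) x - K * x * deriv f x = -(lam - K) * f x) :
    4 * s * (1 - s) * ∫ x in (-D)..D, (deriv (fun y => f y ^ (a / 2)) x) ^ 2
      = (lam - K * s) * ∫ x in (-D)..D, (f x ^ (a / 2)) ^ 2 := by
  subst hs
  have hDD : -D ≤ D := by linarith
  obtain ⟨hf1, -, hf2⟩ := (contDiffOn_succ_iff_deriv_of_isOpen (n := 1) isOpen_Ioo).1
    (hf.mono Ioo_subset_Icc_self)
  generalize hf' : derivWithin f (Icc (-D) D) = f'
  have hf'_eq : ∀ x ∈ Ioo (-D) D, f' =ᶠ[nhds x] deriv f := fun x hx =>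
    Filter.eventually_of_mem (isOpen_Ioo.mem_nhds hx) fun y hy =>
      hf' ▸ derivWithin_of_mem_nhds (Icc_mem_nhds hy.1 hy.2)
  have hderiv : ∀ x ∈ Ioo (-D) D, HasDerivAt f (f' x) x := fun x hx =>
    (hf'_eq x hx).eq_of_nhds ▸ (hf1.differentiableAt (isOpen_Ioo.mem_nhds hx)).hasDerivAt
  have hderiv2 : ∀ x ∈ Ioo (-D) D, HasDerivAt f' (deriv (deriv f) x) x := fun x hx =>
    ((hf2.differentiableOn one_ne_zero).differentiableAt
      (isOpen_Ioo.mem_nhds hx)).hasDerivAt.congr_of_eventuallyEq (hf'_eq x hx)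
  have key := integral_rpow_mul_deriv_sq_eq hDD ha hf.continuousOn
    (hf' ▸ hf.continuousOn_derivWithin (uniqueDiffOn_Icc (by linarith)) one_le_two) hbl hbr hpos
    hderiv hderiv2 fun x hx => (hf'_eq x hx).eq_of_nhds ▸ heig x (Ioo_subset_Icc_self hx)
  have hcoef : 4 * (1 - 1 / a) * (1 - (1 - 1 / a)) * (a ^ 2 / 4) = a - 1 := by
    field_simp; ring
  rw [integral_deriv_rpow_half_sq hDD hpos hderiv, integral_rpow_half_sq hDD hpos]
  linear_combination key + (∫ x in (-D)..D, f x ^ (a - 2) * f' x ^ 2) * hcoef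
end

section
/- Let γ > 0 and d > 0. Suppose that for every s ∈ (0, 1) one has 2γ ≥ 4s(1−s)·π²/d² + s·γ. Then d ≥ 2(√2 − 1)·π/√γ. -/
open Real Set

/-- Step 3 of the Futaki–Li–Li diameter bound: if `2γ ≥ 4s(1-s)π²/d² + sγ` for all
`s ∈ (0,1)`, then `d ≥ 2(√2 - 1)π/√γ`. -/
theorem stmt_6 (γ d : ℝ) (hγ : 0 < γ) (hd : 0 < d)
    (h : ∀ s ∈ Ioo (0:ℝ) 1, 2 * γ ≥ 4 * s * (1 - s) * π ^ 2 / d ^ 2 + s * γ) :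
    d ≥ 2 * (Real.sqrt 2 - 1) * π / Real.sqrt γ := by
  have hπ := Real.pi_pos
  have h2 : Real.sqrt 2 ^ 2 = 2 := Real.sq_sqrt (by norm_num)
  have h2nn := Real.sqrt_nonneg 2
  have h1 : 1 < Real.sqrt 2 := by nlinarith
  have h2' : Real.sqrt 2 < 2 := by nlinarith
  have hs := h (2 - Real.sqrt 2) ⟨by linarith, by linarith⟩
  have hd2 : (0 : ℝ) < d ^ 2 := by positivity
  have hkey : 4 * (2 - Real.sqrt 2) * (1 - (2 - Real.sqrt 2)) * π ^ 2 ≤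
      (2 * γ - (2 - Real.sqrt 2) * γ) * d ^ 2 := by
    rw [← div_le_iff₀ hd2]
    linarith
  have hγq : Real.sqrt γ ^ 2 = γ := Real.sq_sqrt hγ.le
  have hγs : 0 < Real.sqrt γ := Real.sqrt_pos.mpr hγ
  have hk2 : 4 * (Real.sqrt 2 - 1) ^ 2 * π ^ 2 ≤ γ * d ^ 2 := by
    nlinarith [hkey, h2, sq_nonneg π, mul_pos hγ hd2]
  have hab : 0 < d * Real.sqrt γ + 2 * (Real.sqrt 2 - 1) * π := by
    have := mul_pos hd hγs; nlinarith
  rw [ge_iff_le, div_le_iff₀ hγs]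
  nlinarith [hk2, hab, hγq]
end

section
/- Let n ≥ 2, let c₂, …, c_n ∈ ℝ and c' ∈ ℝ, and define F : ℂⁿ → ℝⁿ by F_j(w) = |w_j|² − |w₁|² for j = 2, …, n, and F₁(w) = Re(w₁·w₂⋯w_n) if n is even and F₁(w) = Im(w₁·w₂⋯w_n) if n is odd. Let w ∈ ℂⁿ be a point with F(w) = (c', c₂, …, c_n) at which the (real) Fréchet derivative dF_w : ℂⁿ → ℝⁿ is surjective. Then the kernel V = ker(dF_w), which is an n-dimensional real subspace of ℂⁿ, is isotropic for the standard symplectic form of ℂⁿ: for all u, v ∈ V one has ω(u, v) = Σ_{k=1}^{n} Im(conj(u_k)·v_k) = 0. In particular the level set {w : F(w) = (c', c₂, …, c_n)} is a Lagrangian submanifold of ℂⁿ near any such point. -/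
/-! The components of `F` Poisson-commute. If `X_j` is the Hamiltonian vector field of `F_j`,
i.e. `ω(X_j, ·) = dF_j`, commutation says `X_j ∈ ker dF_w`; surjectivity of `dF_w` makes the
`X_j` linearly independent, so for dimensional reasons they span the kernel, and then
`ω(X_j, v) = dF_j(v) = 0` for `v` in the kernel. The fields are explicit: `-2i w_k e_k` for
`|w_k|²` and `k ↦ conj (ζ ∏_{l ≠ k} w_l)` for `Im (ζ ∏ w)`; taking `ζ = i` covers `Re (∏ w)`. -/

open Complex ComplexConjugate Finset Module

section Isotropic

variable {K V ι : Type*} [Field K] [AddCommGroup V] [Module K V] [Fintype ι]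
  {B : V →ₗ[K] V →ₗ[K] K} {D : V →ₗ[K] ι → K} {X : ι → V}

theorem linearIndependent_of_surjective_of_pairing (hX : ∀ j u, B (X j) u = D u j)
    (hD : Function.Surjective D) : LinearIndependent K X := by
  classical
  rw [Fintype.linearIndependent_iff]
  intro a ha j
  obtain ⟨u, hu⟩ := hD (Pi.single j 1)
  calc a j = ∑ i, a i * D u i := by simp [hu, Pi.single_apply]
    _ = B (∑ i, a i • X i) u := by simp [hX]
    _ = 0 := by rw [ha]; simp

theorem finrank_ker_eq_and_isotropic [FiniteDimensional K V]
    (hX : ∀ j u, B (X j) u = D u j) (hXX : ∀ i j, B (X i) (X j) = 0)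
    (hD : Function.Surjective D) (hdim : finrank K V = 2 * Fintype.card ι) :
    finrank K (LinearMap.ker D) = Fintype.card ι ∧
      ∀ u v, D u = 0 → D v = 0 → B u v = 0 := by
  have hrank : finrank K (LinearMap.ker D) = Fintype.card ι := by
    have := D.finrank_range_add_finrank_ker
    rw [LinearMap.range_eq_top.2 hD, finrank_top, finrank_fintype_fun_eq_card] at this
    omega
  have hspan : Submodule.span K (Set.range X) = LinearMap.ker D := by
    refine Submodule.eq_of_le_of_finrank_le (Submodule.span_le.2 ?_) ?_
    · rintro _ ⟨j, rfl⟩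
      exact LinearMap.mem_ker.2 (funext fun i => (hX i _).symm.trans (hXX i j))
    · rw [hrank, finrank_span_eq_card (linearIndependent_of_surjective_of_pairing hX hD)]
  refine ⟨hrank, fun u v hu hv => ?_⟩
  have hle : Submodule.span K (Set.range X) ≤ LinearMap.ker (B.flip v) := by
    rw [Submodule.span_le]
    rintro _ ⟨j, rfl⟩
    simp [hX, hv]
  exact hle (hspan ▸ LinearMap.mem_ker.2 hu)

end Isotropic

noncomputable section

namespace HarveyLawson

variable {ι : Type*} [Fintype ι]

def symplecticForm : (ι → ℂ) →ₗ[ℝ] (ι → ℂ) →ₗ[ℝ] ℝ :=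
  LinearMap.mk₂ ℝ (fun u v => ∑ k, (conj (u k) * v k).im)
    (fun _ _ _ => by simp [add_mul, sum_add_distrib])
    (fun _ _ _ => by simp [Complex.real_smul, mul_assoc, mul_sum])
    (fun _ _ _ => by simp [mul_add, sum_add_distrib])
    (fun _ _ _ => by simp [Complex.real_smul, mul_left_comm, mul_sum])

@[simp]
theorem symplecticForm_apply (u v : ι → ℂ) :
    symplecticForm u v = ∑ k, (conj (u k) * v k).im := rfl

theorem symplecticForm_self (u : ι → ℂ) : symplecticForm u u = 0 := by
  simp [conj_mul', ← ofReal_pow]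

theorem symplecticForm_swap (u v : ι → ℂ) : symplecticForm v u = -symplecticForm u v := by
  simp only [symplecticForm_apply, ← sum_neg_distrib]
  refine sum_congr rfl fun k _ => ?_
  simp only [mul_im, conj_re, conj_im]
  ring

variable [DecidableEq ι]

theorem symplecticForm_single (i : ι) (a : ℂ) (v : ι → ℂ) :
    symplecticForm (Pi.single i a) v = (conj a * v i).im := by
  rw [symplecticForm_apply, Fintype.sum_eq_single i fun k hk => by simp [hk], Pi.single_eq_same]

def normSqField (w : ι → ℂ) (k : ι) : ι → ℂ := Pi.single k (-2 * I * w k)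

def prodField (ζ : ℂ) (w : ι → ℂ) : ι → ℂ := fun k => conj (ζ * ∏ l ∈ univ.erase k, w l)

theorem hasFDerivAt_normSq_apply (w : ι → ℂ) (k : ι) :
    HasFDerivAt (fun x : ι → ℂ => normSq (x k))
      (LinearMap.toContinuousLinearMap (symplecticForm (normSqField w k))) w := by
  have h := (hasStrictFDerivAt_norm_sq (w k)).hasFDerivAt.comp w (hasFDerivAt_apply (𝕜 := ℝ) k w)
  simp only [← normSq_eq_norm_sq] at h
  refine h.congr_fderiv (ContinuousLinearMap.ext fun u => ?_)
  simp only [ContinuousLinearMap.coe_comp, Function.comp_apply, LinearMap.coe_toContinuousLinearMap',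
    normSqField, symplecticForm_single]
  simp [Complex.inner]
  ring

theorem hasFDerivAt_im_mul_prod (ζ : ℂ) (w : ι → ℂ) :
    HasFDerivAt (fun x : ι → ℂ => (ζ * ∏ k, x k).im)
      (LinearMap.toContinuousLinearMap (symplecticForm (prodField ζ w))) w := by
  have h := imCLM.hasFDerivAt.comp w ((hasFDerivAt_finsetProd (u := univ)).const_mul ζ)
  refine h.congr_fderiv (ContinuousLinearMap.ext fun u => ?_)
  simp [prodField, mul_sum]
  exact sum_congr rfl fun _ _ => by ring

theorem symplecticForm_normSqField (w : ι → ℂ) (a b : ι) :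
    symplecticForm (normSqField w a) (normSqField w b) = 0 := by
  obtain rfl | hab := eq_or_ne a b
  · exact symplecticForm_self _
  · rw [normSqField, symplecticForm_single, normSqField, Pi.single_eq_of_ne hab, mul_zero,
      zero_im]

theorem symplecticForm_prodField_normSqField (ζ : ℂ) (w : ι → ℂ) (k : ι) :
    symplecticForm (prodField ζ w) (normSqField w k) = (-2 * I * ζ * ∏ l, w l).im := by
  rw [symplecticForm_swap, normSqField, symplecticForm_single, prodField, ← map_mul, conj_im,
    neg_neg, ← prod_erase_mul univ w (mem_univ k)]
  ring_nf

def harveyLawsonMap (ζ : ℂ) (o : ι) (w : ι → ℂ) : ι → ℝ := fun j =>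
  if j = o then (ζ * ∏ k, w k).im else normSq (w j) - normSq (w o)

def harveyLawsonField (ζ : ℂ) (o : ι) (w : ι → ℂ) (j : ι) : ι → ℂ :=
  if j = o then prodField ζ w else normSqField w j - normSqField w o

theorem hasFDerivAt_harveyLawsonMap (ζ : ℂ) (o : ι) (w : ι → ℂ) :
    HasFDerivAt (harveyLawsonMap ζ o) (ContinuousLinearMap.pi fun j =>
      LinearMap.toContinuousLinearMap (symplecticForm (harveyLawsonField ζ o w j))) w := by
  refine hasFDerivAt_pi'' fun j => ?_
  rw [ContinuousLinearMap.proj_pi]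
  by_cases hj : j = o
  · simp only [harveyLawsonMap, harveyLawsonField, if_pos hj]
    exact hasFDerivAt_im_mul_prod ζ w
  · simp only [harveyLawsonMap, harveyLawsonField, if_neg hj, map_sub]
    exact (hasFDerivAt_normSq_apply w j).sub (hasFDerivAt_normSq_apply w o)

theorem symplecticForm_harveyLawsonField (ζ : ℂ) (o : ι) (w : ι → ℂ) (i j : ι) :
    symplecticForm (harveyLawsonField ζ o w i) (harveyLawsonField ζ o w j) = 0 := by
  have hprod : ∀ k, symplecticForm (prodField ζ w) (normSqField w k - normSqField w o) = 0 := by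
    intro k
    rw [map_sub, symplecticForm_prodField_normSqField, symplecticForm_prodField_normSqField, sub_self]
  rcases eq_or_ne i o with hi | hi <;> rcases eq_or_ne j o with hj | hj
  · rw [hi, hj]
    exact symplecticForm_self _
  · simp only [harveyLawsonField, if_pos hi, if_neg hj, hprod]
  · rw [symplecticForm_swap]
    simp only [harveyLawsonField, if_pos hj, if_neg hi, hprod, neg_zero]
  · simp only [harveyLawsonField, if_neg hi, if_neg hj, map_sub, LinearMap.sub_apply,
      symplecticForm_normSqField, sub_self]

end HarveyLawson

end

open HarveyLawson in
theorem stmt_10 (n : ℕ) (hn : 2 ≤ n)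
    (F : (Fin n → ℂ) → (Fin n → ℝ))
    (hF : F = fun w j =>
      if j = (⟨0, by omega⟩ : Fin n) then
        (if Even n then (∏ k, w k).re else (∏ k, w k).im)
      else Complex.normSq (w j) - Complex.normSq (w ⟨0, by omega⟩))
    (w : Fin n → ℂ)
    (hsurj : Function.Surjective (fderiv ℝ F w)) :
    Module.finrank ℝ (LinearMap.ker (fderiv ℝ F w : (Fin n → ℂ) →ₗ[ℝ] (Fin n → ℝ))) = n
    ∧ ∀ u v : Fin n → ℂ, fderiv ℝ F w u = 0 → fderiv ℝ F w v = 0 →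
        ∑ k, ((starRingEnd ℂ) (u k) * v k).im = 0 := by
  set ζ : ℂ := if Even n then I else 1
  have hF' : F = harveyLawsonMap ζ ⟨0, by omega⟩ := by
    rw [hF]
    funext x j
    simp only [harveyLawsonMap, ζ]
    split_ifs <;> simp
  have hD : fderiv ℝ F w = ContinuousLinearMap.pi fun j =>
      LinearMap.toContinuousLinearMap (symplecticForm (harveyLawsonField ζ ⟨0, by omega⟩ w j)) :=
    hF' ▸ (hasFDerivAt_harveyLawsonMap ζ _ w).fderiv
  have hdim : finrank ℝ (Fin n → ℂ) = 2 * Fintype.card (Fin n) := by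
    simp [finrank_pi_fintype, mul_comm]
  simpa using finrank_ker_eq_and_isotropic (B := symplecticForm)
    (fun j u => by rw [hD]; rfl) (symplecticForm_harveyLawsonField ζ _ w) hsurj hdim
end
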